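/- arXiv:0906.4080 — 2 statements merged into one kernel-verified Lean document; each statement's English description precedes it below -/
import Mathlib

section
/- Let N=(G,r,p,q,I) be a network in which G is a finite connected simple graph. Then there exists exactly one flow of intensity I from p to q in N that satisfies Kirchhoff's cycle law. -/
/-!
If two flows obey the cycle law, their difference `g` is a circulation for which `g · r` is the
gradient of a potential; summation by parts then makes the energy `∑ g² r` vanish, so `g = 0`.
For existence, every potential `φ` drives a current `(φ y - φ x) / r` obeying the cycle law, whose
divergence is a weighted Laplacian of `φ`. By uniqueness the Laplacian only kills constants, so
its range is the hyperplane of functions with zero sum, which contains the source-sink vector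
`I 𝟙_p - I 𝟙_q`.
-/

open scoped ENNReal Classical

/-- `f` is a flow of intensity `I` from `p` to `q` in the graph `G`:
it is antisymmetric, vanishes on non-adjacent pairs, and satisfies
Kirchhoff's node law at every vertex (the family of values on edges leaving a
vertex is summable, with sum `I` at `p`, `-I` at `q` and `0` elsewhere). -/
def IsFlow {V : Type} (G : SimpleGraph V) (p q : V) (I : ℝ) (f : V → V → ℝ) : Prop :=
  (∀ x y, f x y = - f y x) ∧
  (∀ x y, ¬ G.Adj x y → f x y = 0) ∧
  ∀ x : V, HasSum (fun y : G.neighborSet x => f x y)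
    (if x = p then I else if x = q then -I else 0)

/-- The energy `W(f) = ∑_{xy ∈ E} f(x,y)² r(xy)`; each edge of `G` corresponds to
exactly two ordered adjacent pairs contributing the same amount, whence the
division by 2. Valued in `ℝ≥0∞`. -/
noncomputable def energy {V : Type} (G : SimpleGraph V) (r : Sym2 V → ℝ)
    (f : V → V → ℝ) : ℝ≥0∞ :=
  (∑' e : {e : V × V // G.Adj e.1 e.2},
      ENNReal.ofReal (f e.1.1 e.1.2 ^ 2 * r s(e.1.1, e.1.2))) / 2

/-- Kirchhoff's cycle law: around every (finite) cycle the potential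
differences `f(x,y) · r(xy)` sum to zero. -/
def CycleLaw {V : Type} (G : SimpleGraph V) (r : Sym2 V → ℝ) (f : V → V → ℝ) : Prop :=
  ∀ (v : V) (c : G.Walk v v), c.IsCycle →
    (c.darts.map (fun d => f d.toProd.1 d.toProd.2 * r d.edge)).sum = 0

/-- `f` is cut-respecting: for every set `X` of vertices containing both `p` and `q`
such that only finitely many edges join `X` to its complement, the net flow
across the cut is zero. -/
def CutRespecting {V : Type} (G : SimpleGraph V) (p q : V) (f : V → V → ℝ) : Prop :=
  ∀ X : Set V, p ∈ X → q ∈ X →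
    ∀ hX : {e : V × V | e.1 ∈ X ∧ e.2 ∉ X ∧ G.Adj e.1 e.2}.Finite,
      ∑ e ∈ hX.toFinset, f e.1 e.2 = 0

namespace SimpleGraph.Walk

variable {V : Type*} {G : SimpleGraph V} {M : Type*} [AddCommGroup M]

def dartSum {u v : V} (w : G.Walk u v) (h : V → V → M) : M :=
  (w.darts.map fun d => h d.fst d.snd).sum

@[simp] lemma dartSum_nil (v : V) (h : V → V → M) : (nil : G.Walk v v).dartSum h = 0 := rfl

@[simp] lemma dartSum_cons {u x v : V} (ha : G.Adj u x) (w : G.Walk x v) (h : V → V → M) :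
    (cons ha w).dartSum h = h u x + w.dartSum h := by
  simp [dartSum]

@[simp] lemma dartSum_append {u v z : V} (w₁ : G.Walk u v) (w₂ : G.Walk v z) (h : V → V → M) :
    (w₁.append w₂).dartSum h = w₁.dartSum h + w₂.dartSum h := by
  simp [dartSum]

lemma dartSum_sub {u v : V} (w : G.Walk u v) (h₁ h₂ : V → V → M) :
    w.dartSum (h₁ - h₂) = w.dartSum h₁ - w.dartSum h₂ := by
  induction w with
  | nil => simp
  | cons ha w ih => simp only [dartSum_cons, ih, Pi.sub_apply]; abel

lemma dartSum_congr {u v : V} (w : G.Walk u v) {h₁ h₂ : V → V → M}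
    (heq : ∀ x y, G.Adj x y → h₁ x y = h₂ x y) : w.dartSum h₁ = w.dartSum h₂ := by
  induction w with
  | nil => rfl
  | cons ha w ih => rw [dartSum_cons, dartSum_cons, ih, heq _ _ ha]

lemma dartSum_sub_potential {u v : V} (w : G.Walk u v) (ψ : V → M) :
    w.dartSum (fun x y => ψ y - ψ x) = ψ v - ψ u := by
  induction w with
  | nil => simp
  | cons ha w ih => rw [dartSum_cons, ih]; abel

section Antisymm

variable {h : V → V → M} (hanti : ∀ x y, h x y = -h y x)
include hanti

lemma dartSum_reverse {u v : V} (w : G.Walk u v) : w.reverse.dartSum h = -w.dartSum h := by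
  induction w with
  | nil => simp
  | @cons a b _ ha w ih =>
    simp only [reverse_cons, dartSum_append, ih, dartSum_cons, dartSum_nil, hanti b a]
    abel

variable (hcyc : ∀ (v : V) (c : G.Walk v v), c.IsCycle → c.dartSum h = 0)
include hcyc

/-- Closing a path by an edge gives a cycle, unless the path is that edge traversed backwards. -/
lemma dartSum_cons_eq_zero_of_isPath {u x : V} (ha : G.Adj u x) {t : G.Walk x u}
    (ht : t.IsPath) : (cons ha t).dartSum h = 0 := by
  by_cases he : s(u, x) ∈ t.edges
  · cases t with
    | nil => simp at he
    | @cons _ y _ hb t' =>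
      obtain ⟨ht', hx⟩ := (cons_isPath_iff hb t').mp ht
      rcases List.mem_cons.mp (edges_cons hb t' ▸ he) with hux | hux
      · obtain rfl : y = u := by
          rcases Sym2.eq_iff.mp hux with ⟨rfl, -⟩ | ⟨rfl, -⟩
          · exact absurd ha (G.irrefl)
          · rfl
        obtain rfl := (isPath_iff_nil.mp ht').eq_nil
        simp only [dartSum_cons, dartSum_nil, add_zero]
        rw [hanti, neg_add_cancel]
      · exact absurd (t'.snd_mem_support_of_mem_edges hux) hx
  · exact hcyc u _ ((cons_isCycle_iff t ha).mpr ⟨ht, he⟩)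

lemma dartSum_bypass [DecidableEq V] {u v : V} (w : G.Walk u v) :
    w.bypass.dartSum h = w.dartSum h := by
  induction w with
  | nil => rfl
  | @cons u x v ha w ih =>
    rw [bypass]
    split_ifs with hu
    · have hloop := dartSum_cons_eq_zero_of_isPath hanti hcyc ha
        (w.bypass_isPath.takeUntil hu)
      rw [dartSum_cons] at hloop
      have hsplit := congrArg (dartSum · h) (w.bypass.take_spec hu)
      simp only [dartSum_append] at hsplit
      rw [dartSum_cons, ← ih, ← hsplit, ← add_assoc, hloop, zero_add]
    · rw [dartSum_cons, dartSum_cons, ih]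

lemma dartSum_eq_zero_of_closed {u : V} (w : G.Walk u u) : w.dartSum h = 0 := by
  classical
  rw [← dartSum_bypass hanti hcyc, (isPath_iff_nil.mp w.bypass_isPath).eq_nil, dartSum_nil]

lemma dartSum_eq_dartSum {u v : V} (w₁ w₂ : G.Walk u v) : w₁.dartSum h = w₂.dartSum h := by
  have := dartSum_eq_zero_of_closed hanti hcyc (w₁.append w₂.reverse)
  rwa [dartSum_append, dartSum_reverse hanti, ← sub_eq_add_neg, sub_eq_zero] at this

end Antisymm

end SimpleGraph.Walk

namespace SimpleGraph

open Walk

variable {V : Type*} {G : SimpleGraph V} {M : Type*} [AddCommGroup M]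

theorem Connected.exists_potential (hconn : G.Connected) {h : V → V → M}
    (hanti : ∀ x y, h x y = -h y x)
    (hcyc : ∀ (v : V) (c : G.Walk v v), c.IsCycle → c.dartSum h = 0) :
    ∃ ψ : V → M, ∀ x y, G.Adj x y → h x y = ψ y - ψ x := by
  obtain ⟨v₀⟩ := hconn.nonempty
  let ψ x := (hconn.preconnected v₀ x).some.dartSum h
  refine ⟨ψ, fun x y hxy => ?_⟩
  have := dartSum_eq_dartSum hanti hcyc (hconn.preconnected v₀ y).some
    ((hconn.preconnected v₀ x).some.append hxy.toWalk)
  simp only [dartSum_append, Adj.toWalk, dartSum_cons, dartSum_nil, add_zero] at this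
  simp only [ψ, this]
  abel

lemma Reachable.apply_eq_of_forall_adj {α : Type*} {φ : V → α}
    (hφ : ∀ x y, G.Adj x y → φ x = φ y) {u v : V} (h : G.Reachable u v) : φ u = φ v := by
  obtain ⟨w⟩ := h
  induction w with
  | nil => rfl
  | cons ha _ ih => exact (hφ _ _ ha).trans ih

end SimpleGraph

open Finset SimpleGraph Walk

section FiniteSums

variable {V : Type*} [Fintype V]

lemma sum_sum_eq_zero_of_antisymm {M : Type*} [AddCommGroup M] [IsAddTorsionFree M]
    {g : V → V → M} (hanti : ∀ x y, g x y = -g y x) : ∑ x, ∑ y, g x y = 0 := by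
  refine self_eq_neg.mp ?_
  conv_lhs => rw [sum_comm]
  rw [← sum_neg_distrib]
  exact sum_congr rfl fun y _ => by rw [← sum_neg_distrib]; exact sum_congr rfl fun x _ => hanti x y

lemma sum_sum_mul_sub_eq_zero {R : Type*} [CommRing R] [IsAddTorsionFree R]
    {g : V → V → R} (hanti : ∀ x y, g x y = -g y x) (hdiv : ∀ x, ∑ y, g x y = 0) (ψ : V → R) :
    ∑ x, ∑ y, g x y * (ψ y - ψ x) = 0 := by
  have hsym : ∑ x, ∑ y, g x y * (ψ y + ψ x) = 0 :=
    sum_sum_eq_zero_of_antisymm fun x y => by rw [hanti]; ring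
  have hsrc : ∑ x, ∑ y, g x y * ψ x = 0 := by simp [← sum_mul, hdiv]
  calc ∑ x, ∑ y, g x y * (ψ y - ψ x)
      = ∑ x, ∑ y, g x y * (ψ y + ψ x) - 2 * ∑ x, ∑ y, g x y * ψ x := by
        rw [mul_sum, ← sum_sub_distrib]
        refine sum_congr rfl fun x _ => ?_
        rw [mul_sum, ← sum_sub_distrib]
        exact sum_congr rfl fun y _ => by ring
    _ = 0 := by rw [hsym, hsrc, mul_zero, sub_zero]

end FiniteSums

section Network

variable {V : Type} {G : SimpleGraph V} {r : Sym2 V → ℝ}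

lemma cycleLaw_iff {f : V → V → ℝ} :
    CycleLaw G r f ↔ ∀ (v : V) (c : G.Walk v v), c.IsCycle →
      c.dartSum (fun x y => f x y * r s(x, y)) = 0 := Iff.rfl

lemma CycleLaw.sub {f₁ f₂ : V → V → ℝ} (h₁ : CycleLaw G r f₁) (h₂ : CycleLaw G r f₂) :
    CycleLaw G r (f₁ - f₂) := by
  rw [cycleLaw_iff] at h₁ h₂ ⊢
  intro v c hc
  have hsplit : (fun x y => (f₁ - f₂) x y * r s(x, y)) =
      (fun x y => f₁ x y * r s(x, y)) - (fun x y => f₂ x y * r s(x, y)) := by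
    funext x y
    simp only [Pi.sub_apply, sub_mul]
  rw [hsplit, dartSum_sub, h₁ v c hc, h₂ v c hc, sub_zero]

variable [Fintype V]

lemma hasSum_neighborSet_iff {g : V → ℝ} {x : V} (hg : ∀ y, ¬G.Adj x y → g y = 0) {a : ℝ} :
    HasSum (fun y : G.neighborSet x => g y) a ↔ ∑ y, g y = a := by
  change HasSum (g ∘ Subtype.val) a ↔ _
  rw [hasSum_subtype_iff_indicator, Set.indicator_eq_self (s := G.neighborSet x) |>.mpr
    (Function.support_subset_iff'.mpr fun y hy => hg y hy)]
  exact ⟨fun h => (hasSum_fintype g).unique h, fun h => h ▸ hasSum_fintype g⟩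

lemma isFlow_iff {p q : V} {I : ℝ} {f : V → V → ℝ} :
    IsFlow G p q I f ↔ (∀ x y, f x y = -f y x) ∧ (∀ x y, ¬G.Adj x y → f x y = 0) ∧
      ∀ x, ∑ y, f x y = if x = p then I else if x = q then -I else 0 :=
  and_congr_right fun _ => and_congr_right fun hadj =>
    forall_congr' fun x => hasSum_neighborSet_iff (hadj x)

theorem eq_zero_of_cycleLaw (hconn : G.Connected) (hr : ∀ e ∈ G.edgeSet, 0 < r e)
    {g : V → V → ℝ} (hanti : ∀ x y, g x y = -g y x) (hadj : ∀ x y, ¬G.Adj x y → g x y = 0)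
    (hdiv : ∀ x, ∑ y, g x y = 0) (hcyc : CycleLaw G r g) : g = 0 := by
  obtain ⟨ψ, hψ⟩ := hconn.exists_potential
    (h := fun x y => g x y * r s(x, y)) (fun x y => by rw [hanti, Sym2.eq_swap]; ring) hcyc
  have hwork : ∀ x y, g x y * (ψ y - ψ x) = g x y ^ 2 * r s(x, y) := fun x y => by
    by_cases hxy : G.Adj x y
    · rw [← hψ x y hxy]; ring
    · simp [hadj x y hxy]
  have hnonneg : ∀ x y, 0 ≤ g x y ^ 2 * r s(x, y) := fun x y => by
    by_cases hxy : G.Adj x y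
    · exact mul_nonneg (sq_nonneg _) (hr _ hxy).le
    · simp [hadj x y hxy]
  have henergy := sum_sum_mul_sub_eq_zero hanti hdiv ψ
  simp only [hwork] at henergy
  funext x y
  by_cases hxy : G.Adj x y
  · have hxy_zero := (sum_eq_zero_iff_of_nonneg fun y _ => hnonneg x y).mp
      ((sum_eq_zero_iff_of_nonneg fun x _ => sum_nonneg fun y _ => hnonneg x y).mp henergy x
        (mem_univ x)) y (mem_univ y)
    exact pow_eq_zero_iff two_ne_zero |>.mp
      ((mul_eq_zero.mp hxy_zero).resolve_right (hr _ hxy).ne')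
  · exact hadj x y hxy

theorem IsFlow.eq_of_cycleLaw (hconn : G.Connected) (hr : ∀ e ∈ G.edgeSet, 0 < r e)
    {p q : V} {I : ℝ} {f₁ f₂ : V → V → ℝ} (h₁ : IsFlow G p q I f₁) (h₂ : IsFlow G p q I f₂)
    (hc₁ : CycleLaw G r f₁) (hc₂ : CycleLaw G r f₂) : f₁ = f₂ := by
  obtain ⟨hanti₁, hadj₁, hdiv₁⟩ := isFlow_iff.mp h₁
  obtain ⟨hanti₂, hadj₂, hdiv₂⟩ := isFlow_iff.mp h₂
  refine sub_eq_zero.mp (eq_zero_of_cycleLaw hconn hr (fun x y => ?_) (fun x y hxy => ?_)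
    (fun x => ?_) (hc₁.sub hc₂))
  · simp only [Pi.sub_apply, hanti₁ x y, hanti₂ x y]; ring
  · simp only [Pi.sub_apply, hadj₁ x y hxy, hadj₂ x y hxy, sub_zero]
  · simp only [Pi.sub_apply, sum_sub_distrib, hdiv₁, hdiv₂, sub_self]

end Network

section Potential

variable {V : Type} (G : SimpleGraph V) (r : Sym2 V → ℝ)

noncomputable def current (φ : V → ℝ) (x y : V) : ℝ :=
  if G.Adj x y then (φ y - φ x) / r s(x, y) else 0

variable {G r}

lemma current_antisymm (φ : V → ℝ) (x y : V) : current G r φ x y = -current G r φ y x := by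
  by_cases hxy : G.Adj x y
  · rw [current, current, if_pos hxy, if_pos hxy.symm, Sym2.eq_swap]; ring
  · rw [current, current, if_neg hxy, if_neg fun h => hxy h.symm, neg_zero]

lemma current_of_not_adj (φ : V → ℝ) {x y : V} (hxy : ¬G.Adj x y) : current G r φ x y = 0 :=
  if_neg hxy

lemma cycleLaw_current (hr : ∀ e ∈ G.edgeSet, 0 < r e) (φ : V → ℝ) :
    CycleLaw G r (current G r φ) := by
  rw [cycleLaw_iff]
  intro v c _
  rw [c.dartSum_congr (h₂ := fun x y => φ y - φ x) fun x y hxy => ?_, dartSum_sub_potential,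
    sub_self]
  rw [current, if_pos hxy]
  exact div_mul_cancel₀ _ (hr _ hxy).ne'

variable [Fintype V]

variable (G r) in
noncomputable def laplacian : (V → ℝ) →ₗ[ℝ] V → ℝ where
  toFun φ x := ∑ y, current G r φ x y
  map_add' φ ψ := by
    funext x
    simp only [Pi.add_apply, ← sum_add_distrib, current]
    exact sum_congr rfl fun y _ => by split_ifs <;> ring
  map_smul' c φ := by
    funext x
    simp only [Pi.smul_apply, smul_eq_mul, RingHom.id_apply, mul_sum, current]
    exact sum_congr rfl fun y _ => by split_ifs <;> ring

lemma ker_laplacian_le (hconn : G.Connected) (hr : ∀ e ∈ G.edgeSet, 0 < r e) :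
    LinearMap.ker (laplacian G r) ≤ ℝ ∙ 1 := by
  intro φ hφ
  have hcurrent := eq_zero_of_cycleLaw hconn hr (current_antisymm φ)
    (fun _ _ => current_of_not_adj φ) (fun x => congrFun hφ x) (cycleLaw_current hr φ)
  have hadj : ∀ x y, G.Adj x y → φ x = φ y := fun x y hxy => by
    have := congrFun (congrFun hcurrent x) y
    rw [current, if_pos hxy, Pi.zero_apply, Pi.zero_apply, div_eq_zero_iff,
      or_iff_left (hr _ hxy).ne', sub_eq_zero] at this
    exact this.symm
  obtain ⟨v₀⟩ := hconn.nonempty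
  refine Submodule.mem_span_singleton.mpr ⟨φ v₀, funext fun x => ?_⟩
  rw [Pi.smul_apply, Pi.one_apply, smul_eq_mul, mul_one]
  exact (hconn.preconnected v₀ x).apply_eq_of_forall_adj hadj

lemma sum_laplacian (φ : V → ℝ) : ∑ x, laplacian G r φ x = 0 :=
  sum_sum_eq_zero_of_antisymm (current_antisymm φ)

theorem exists_laplacian_eq (hconn : G.Connected) (hr : ∀ e ∈ G.edgeSet, 0 < r e)
    {b : V → ℝ} (hb : ∑ x, b x = 0) : ∃ φ, laplacian G r φ = b := by
  let σ : (V → ℝ) →ₗ[ℝ] ℝ := ∑ x, LinearMap.proj x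
  have hσ : ∀ φ, σ φ = ∑ x, φ x := fun φ => by simp [σ]
  have hle : LinearMap.range (laplacian G r) ≤ LinearMap.ker σ := by
    rintro _ ⟨φ, rfl⟩
    rw [LinearMap.mem_ker, hσ, sum_laplacian]
  have hker : Module.finrank ℝ (LinearMap.ker (laplacian G r)) ≤ 1 :=
    (Submodule.finrank_mono (ker_laplacian_le hconn hr)).trans
      ((finrank_span_le_card _).trans (by simp))
  have hσ_ne_top : LinearMap.ker σ ≠ ⊤ := by
    intro htop
    have h1 : σ 1 = 0 := LinearMap.mem_ker.mp (htop ▸ Submodule.mem_top)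
    rw [hσ] at h1
    have := hconn.nonempty
    simp [Fintype.card_ne_zero] at h1
  have hlt := Submodule.finrank_lt hσ_ne_top
  have hrank := (laplacian G r).finrank_range_add_finrank_ker
  have hrange : LinearMap.range (laplacian G r) = LinearMap.ker σ :=
    Submodule.eq_of_le_of_finrank_le hle (by omega)
  have hbσ : b ∈ LinearMap.ker σ := by rw [LinearMap.mem_ker, hσ, hb]
  exact LinearMap.mem_range.mp (hrange ▸ hbσ)

end Potential

/-- In a finite connected network there is exactly one flow of intensity `I`
from `p` to `q` satisfying Kirchhoff's cycle law. -/
theorem unique_electrical_current_finite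
    {V : Type} [Fintype V] (G : SimpleGraph V) (hconn : G.Connected)
    (r : Sym2 V → ℝ) (hr : ∀ e ∈ G.edgeSet, 0 < r e)
    (p q : V) (hpq : p ≠ q) (I : ℝ) :
    ∃! f : V → V → ℝ, IsFlow G p q I f ∧ CycleLaw G r f := by
  obtain ⟨φ, hφ⟩ := exists_laplacian_eq hconn hr
    (b := fun x => if x = p then I else if x = q then -I else 0)
    (by rw [Fintype.sum_eq_add p q hpq (fun x hx => by simp [hx.1, hx.2])]; simp [hpq.symm])
  have hflow : IsFlow G p q I (current G r φ) :=
    isFlow_iff.mpr ⟨current_antisymm φ, fun _ _ => current_of_not_adj φ, congrFun hφ⟩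
  refine ⟨current G r φ, ⟨hflow, cycleLaw_current hr φ⟩, fun f ⟨hf, hfc⟩ => ?_⟩
  exact hf.eq_of_cycleLaw hconn hr hflow hfc (cycleLaw_current hr φ)
end

section
/- Let N=(G,r,p,q,I) be a network in which G is a countable, connected, locally finite simple graph. Then there is a unique cut-respecting flow i of intensity I from p to q of minimum energy; that is, W(i) ≤ W(f) for every cut-respecting flow f of intensity I, and every cut-respecting flow of intensity I attaining this minimum equals i. Moreover, this flow i satisfies Kirchhoff's cycle law. -/
open scoped ENNReal Classical

/-!
Encode an edge function `f` of finite energy by `g (x, y) = f (x, y) √r(xy)` in `ℓ²` over the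
ordered adjacent pairs, so that `W(f) = ‖g‖² / 2`. By local finiteness the node laws and the cut
conditions are closed linear conditions, so the encodings of the cut-respecting flows of intensity
`I` form a closed convex set; it is nonempty since it contains `I` times the unit flow along a
`p`–`q` path. Its element of minimal norm is the flow sought; it is unique because the norm of
a Hilbert space is strictly convex.
Adding any multiple of the unit flow around a cycle keeps a flow feasible, so the minimizer is
orthogonal to it; that inner product is twice the sum of the potential differences around the
cycle.
-/

open scoped RealInnerProductSpace

section MinNorm

variable {E : Type*} [NormedAddCommGroup E] [InnerProductSpace ℝ E] {K : Set E} {g h : E}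

theorem exists_mem_forall_norm_le [CompleteSpace E] (hne : K.Nonempty) (hclosed : IsClosed K)
    (hK : Convex ℝ K) : ∃ g ∈ K, ∀ h ∈ K, ‖g‖ ≤ ‖h‖ := by
  obtain ⟨g, hg, hinf⟩ := exists_norm_eq_iInf_of_complete_convex hne hclosed.isComplete hK 0
  refine ⟨g, hg, fun h hh => ?_⟩
  have hbdd : BddBelow (Set.range fun w : K => ‖(0 : E) - w‖) :=
    ⟨0, Set.forall_mem_range.2 fun _ => norm_nonneg _⟩
  have := ciInf_le hbdd ⟨h, hh⟩
  rwa [← hinf, zero_sub, zero_sub, norm_neg, norm_neg] at this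

theorem inner_sub_nonneg_of_forall_norm_le (hK : Convex ℝ K) (hg : g ∈ K)
    (hmin : ∀ h ∈ K, ‖g‖ ≤ ‖h‖) (hh : h ∈ K) : 0 ≤ ⟪g, h - g⟫ := by
  have hinf : ‖(0 : E) - g‖ = ⨅ w : K, ‖(0 : E) - w‖ := by
    have : Nonempty K := ⟨⟨g, hg⟩⟩
    simpa using le_antisymm (le_ciInf fun w : K => hmin w w.2)
      (ciInf_le ⟨0, Set.forall_mem_range.2 fun _ => norm_nonneg _⟩ (⟨g, hg⟩ : K))
  simpa [inner_neg_left] using (norm_eq_iInf_iff_real_inner_le_zero hK hg).1 hinf h hh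

theorem eq_of_norm_le_of_forall_norm_le (hK : Convex ℝ K) (hg : g ∈ K)
    (hmin : ∀ h ∈ K, ‖g‖ ≤ ‖h‖) (hh : h ∈ K) (hle : ‖h‖ ≤ ‖g‖) : h = g := by
  have hminh : ∀ k ∈ K, ‖h‖ ≤ ‖k‖ := fun k hk => hle.trans (hmin k hk)
  have h₁ := inner_sub_nonneg_of_forall_norm_le hK hg hmin hh
  have h₂ := inner_sub_nonneg_of_forall_norm_le hK hh hminh hg
  -- adding the two variational inequalities gives `‖h - g‖² ≤ 0`
  have : ‖h - g‖ ^ 2 ≤ 0 := by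
    rw [← real_inner_self_eq_norm_sq]
    have : ⟪h - g, h - g⟫ = -⟪g, h - g⟫ - ⟪h, g - h⟫ := by
      simp only [inner_sub_left, inner_sub_right, real_inner_comm]; ring
    linarith
  exact sub_eq_zero.1 (norm_eq_zero.1 (sq_nonpos_iff _ |>.1 this))

theorem inner_eq_zero_of_add_mem_of_sub_mem (hK : Convex ℝ K) (hg : g ∈ K)
    (hmin : ∀ h ∈ K, ‖g‖ ≤ ‖h‖) (hadd : g + h ∈ K) (hsub : g - h ∈ K) : ⟪g, h⟫ = 0 := by
  have h₁ := inner_sub_nonneg_of_forall_norm_le hK hg hmin hadd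
  have h₂ := inner_sub_nonneg_of_forall_norm_le hK hg hmin hsub
  simp only [add_sub_cancel_left, sub_sub_cancel_left, inner_neg_right] at h₁ h₂
  linarith

end MinNorm

section Flows

variable {V : Type} {G : SimpleGraph V} {p q : V} {I : ℝ}

def HasDivergence (G : SimpleGraph V) (f : V → V → ℝ) (δ : V → ℝ) : Prop :=
  (∀ x y, f x y = - f y x) ∧
  (∀ x y, ¬ G.Adj x y → f x y = 0) ∧
  ∀ x : V, HasSum (fun y : G.neighborSet x => f x y) (δ x)

theorem isFlow_iff_hasDivergence {f : V → V → ℝ} :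
    IsFlow G p q I f ↔
      HasDivergence G f (fun x => if x = p then I else if x = q then -I else 0) :=
  Iff.rfl

theorem HasDivergence.add {f g : V → V → ℝ} {δ ε : V → ℝ} (hf : HasDivergence G f δ)
    (hg : HasDivergence G g ε) : HasDivergence G (f + g) (δ + ε) :=
  ⟨fun x y => by simp [hf.1 x y, hg.1 x y, add_comm],
    fun x y h => by simp [hf.2.1 x y h, hg.2.1 x y h],
    fun x => (hf.2.2 x).add (hg.2.2 x)⟩

theorem HasDivergence.smul {f : V → V → ℝ} {δ : V → ℝ} (c : ℝ) (hf : HasDivergence G f δ) :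
    HasDivergence G (c • f) (c • δ) :=
  ⟨fun x y => by simp [hf.1 x y], fun x y h => by simp [hf.2.1 x y h],
    fun x => (hf.2.2 x).mul_left c⟩

theorem isClosed_setOf_hasDivergence (hlf : ∀ v : V, (G.neighborSet v).Finite) (δ : V → ℝ) :
    IsClosed {f : V → V → ℝ | HasDivergence G f δ} := by
  have hcoord (x y : V) : Continuous fun f : V → V → ℝ => f x y := continuous_apply_apply x y
  simp only [HasDivergence, Set.ofPred_and, Set.ofPred_forall]
  refine (isClosed_iInter fun x => isClosed_iInter fun y =>
    isClosed_eq (hcoord x y) (hcoord y x).neg).inter <|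
    (isClosed_iInter fun x => isClosed_iInter fun y => isClosed_iInter fun _ =>
      isClosed_eq (hcoord x y) continuous_const).inter <| isClosed_iInter fun x => ?_
  have : Fintype (G.neighborSet x) := (hlf x).fintype
  simp_rw [Summable.of_finite.hasSum_iff, tsum_fintype]
  exact isClosed_eq (continuous_finsetSum _ fun y _ => hcoord x y) continuous_const

theorem IsFlow.add {J : ℝ} {f g : V → V → ℝ} (hf : IsFlow G p q I f)
    (hg : IsFlow G p q J g) : IsFlow G p q (I + J) (f + g) := by
  rw [isFlow_iff_hasDivergence] at *
  convert hf.add hg using 1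
  ext x
  simp only [Pi.add_apply]
  split_ifs <;> ring

theorem IsFlow.smul {f : V → V → ℝ} (c : ℝ) (hf : IsFlow G p q I f) :
    IsFlow G p q (c * I) (c • f) := by
  rw [isFlow_iff_hasDivergence] at *
  convert hf.smul c using 1
  ext x
  simp only [Pi.smul_apply, smul_eq_mul]
  split_ifs <;> ring

variable (G) in
def cutRespectingSubmodule (p q : V) : Submodule ℝ (V → V → ℝ) where
  carrier := {f | CutRespecting G p q f}
  add_mem' hf hg X hp hq hX := by
    simp [Finset.sum_add_distrib, hf X hp hq hX, hg X hp hq hX]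
  zero_mem' _ _ _ _ := by simp
  smul_mem' c f hf X hp hq hX := by
    simp [← Finset.mul_sum, hf X hp hq hX]

theorem isClosed_cutRespectingSubmodule (p q : V) :
    IsClosed (cutRespectingSubmodule G p q : Set (V → V → ℝ)) := by
  change IsClosed {f | CutRespecting G p q f}
  simp only [CutRespecting, Set.ofPred_forall]
  exact isClosed_iInter fun X => isClosed_iInter fun _ => isClosed_iInter fun _ =>
    isClosed_iInter fun hX => isClosed_eq
      (continuous_finsetSum _ fun e _ => continuous_apply_apply e.1 e.2) continuous_const

variable (G) in
def cutRespectingFlows (p q : V) (I : ℝ) : Set (V → V → ℝ) :=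
  {f | IsFlow G p q I f ∧ CutRespecting G p q f}

theorem add_mem_cutRespectingFlows {J : ℝ} {f g : V → V → ℝ}
    (hf : f ∈ cutRespectingFlows G p q I) (hg : g ∈ cutRespectingFlows G p q J) :
    f + g ∈ cutRespectingFlows G p q (I + J) :=
  ⟨hf.1.add hg.1, (cutRespectingSubmodule G p q).add_mem hf.2 hg.2⟩

theorem smul_mem_cutRespectingFlows {f : V → V → ℝ} (c : ℝ)
    (hf : f ∈ cutRespectingFlows G p q I) : c • f ∈ cutRespectingFlows G p q (c * I) :=
  ⟨hf.1.smul c, (cutRespectingSubmodule G p q).smul_mem c hf.2⟩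

theorem convex_cutRespectingFlows : Convex ℝ (cutRespectingFlows G p q I) := by
  intro f hf g hg a b _ _ hab
  have := add_mem_cutRespectingFlows (smul_mem_cutRespectingFlows a hf)
    (smul_mem_cutRespectingFlows b hg)
  rwa [← add_mul, hab, one_mul] at this

theorem isClosed_cutRespectingFlows (hlf : ∀ v : V, (G.neighborSet v).Finite) :
    IsClosed (cutRespectingFlows G p q I) :=
  (isClosed_setOf_hasDivergence hlf _).inter (isClosed_cutRespectingSubmodule p q)

noncomputable def dartFlow (d : G.Dart) : V → V → ℝ := fun x y =>
  (if (x, y) = d.toProd then 1 else 0) - (if (x, y) = d.toProd.swap then 1 else 0)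

theorem hasSum_neighborSet_ite_eq {a c : V} (hac : G.Adj a c) (x : V) :
    HasSum (fun y : G.neighborSet x => if (x, (y : V)) = (a, c) then (1 : ℝ) else 0)
      ((Pi.single a 1 : V → ℝ) x) := by
  by_cases hx : x = a
  · subst hx
    convert hasSum_ite_eq (⟨c, hac⟩ : G.neighborSet x) (1 : ℝ) using 1
    · ext y
      simp [Subtype.ext_iff]
    · simp
  · simp [hx]

theorem hasDivergence_dartFlow (d : G.Dart) :
    HasDivergence G (dartFlow d) (Pi.single d.fst 1 - Pi.single d.snd 1) := by
  obtain ⟨⟨a, c⟩, hac⟩ := d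
  refine ⟨fun x y => ?_, fun x y hxy => ?_, fun x =>
    (hasSum_neighborSet_ite_eq hac x).sub (hasSum_neighborSet_ite_eq hac.symm x)⟩
  · simp only [dartFlow, Prod.swap_prod_mk, Prod.mk.injEq]
    split_ifs <;> grind
  · have h₁ : (x, y) ≠ (a, c) := by rintro ⟨⟩; exact hxy hac
    have h₂ : (x, y) ≠ (c, a) := by rintro ⟨⟩; exact hxy hac.symm
    simp [dartFlow, h₁, h₂]

theorem sum_cut_dartFlow (d : G.Dart) {X : Set V}
    (hX : {e : V × V | e.1 ∈ X ∧ e.2 ∉ X ∧ G.Adj e.1 e.2}.Finite) :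
    ∑ e ∈ hX.toFinset, dartFlow d e.1 e.2 = X.indicator 1 d.fst - X.indicator 1 d.snd := by
  obtain ⟨⟨a, c⟩, hac⟩ := d
  simp only [dartFlow, Prod.mk.eta, Finset.sum_sub_distrib, Finset.sum_ite_eq',
    Set.Finite.mem_toFinset, Set.mem_ofPred_eq, Prod.swap_prod_mk, Set.indicator_apply]
  by_cases ha : a ∈ X <;> by_cases hc : c ∈ X <;> simp [ha, hc, hac, hac.symm]

noncomputable def walkFlow {a b : V} (w : G.Walk a b) : V → V → ℝ := (w.darts.map dartFlow).sum

theorem hasDivergence_walkFlow {a b : V} (w : G.Walk a b) :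
    HasDivergence G (walkFlow w) (Pi.single a 1 - Pi.single b 1) := by
  induction w with
  | nil => exact ⟨by simp [walkFlow], by simp [walkFlow], fun _ => by simp [walkFlow]⟩
  | cons h w ih =>
    simpa [walkFlow] using (hasDivergence_dartFlow ⟨(_, _), h⟩).add ih

theorem sum_cut_walkFlow {a b : V} (w : G.Walk a b) {X : Set V}
    (hX : {e : V × V | e.1 ∈ X ∧ e.2 ∉ X ∧ G.Adj e.1 e.2}.Finite) :
    ∑ e ∈ hX.toFinset, walkFlow w e.1 e.2 = X.indicator 1 a - X.indicator 1 b := by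
  induction w with
  | nil => simp [walkFlow]
  | cons h w ih =>
    simp only [walkFlow, SimpleGraph.Walk.darts_cons, List.map_cons, List.sum_cons] at ih ⊢
    simp only [Pi.add_apply, Finset.sum_add_distrib, ih, sum_cut_dartFlow]
    ring

theorem walkFlow_mem_cutRespectingFlows (hpq : p ≠ q) (w : G.Walk p q) :
    walkFlow w ∈ cutRespectingFlows G p q 1 := by
  refine ⟨?_, fun X hp hq hX => by simp [sum_cut_walkFlow w hX, hp, hq]⟩
  rw [isFlow_iff_hasDivergence]
  convert hasDivergence_walkFlow w using 2 with x
  by_cases hxp : x = p <;> by_cases hxq : x = q <;> simp_all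

theorem walkFlow_mem_cutRespectingFlows_zero {v : V} (c : G.Walk v v) :
    walkFlow c ∈ cutRespectingFlows G p q 0 := by
  refine ⟨?_, fun X _ _ hX => by simp [sum_cut_walkFlow c hX]⟩
  rw [isFlow_iff_hasDivergence]
  convert hasDivergence_walkFlow c using 2 with x
  simp

end Flows

section EdgeL2

variable {V : Type} (G : SimpleGraph V) (r : Sym2 V → ℝ)

abbrev EdgeL2 : Type := lp (fun _ : {e : V × V // G.Adj e.1 e.2} => ℝ) 2

noncomputable def edgeFun : EdgeL2 G →ₗ[ℝ] V → V → ℝ where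
  toFun g x y := if h : G.Adj x y then g ⟨(x, y), h⟩ / √(r s(x, y)) else 0
  map_add' g h := by ext x y; by_cases hxy : G.Adj x y <;> simp [hxy, add_div]
  map_smul' c g := by ext x y; by_cases hxy : G.Adj x y <;> simp [hxy, mul_div_assoc]

variable {G r}

theorem edgeFun_apply_of_adj (g : EdgeL2 G) {x y : V} (h : G.Adj x y) :
    edgeFun G r g x y = g ⟨(x, y), h⟩ / √(r s(x, y)) :=
  dif_pos h

theorem edgeFun_apply_of_not_adj (g : EdgeL2 G) {x y : V} (h : ¬ G.Adj x y) :
    edgeFun G r g x y = 0 :=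
  dif_neg h

theorem continuous_edgeFun : Continuous (edgeFun G r) := by
  refine continuous_pi fun x => continuous_pi fun y => ?_
  by_cases h : G.Adj x y
  · simp only [edgeFun_apply_of_adj _ h]
    exact ((continuous_apply _).comp lp.uniformContinuous_coe.continuous).div_const _
  · simpa only [edgeFun_apply_of_not_adj _ h] using continuous_const

variable (hr : ∀ e ∈ G.edgeSet, 0 < r e)
include hr

theorem apply_eq_edgeFun_mul_sqrt (g : EdgeL2 G) (e : {e : V × V // G.Adj e.1 e.2}) :
    g e = edgeFun G r g e.1.1 e.1.2 * √(r s(e.1.1, e.1.2)) := by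
  rw [edgeFun_apply_of_adj _ e.2, div_mul_cancel₀]
  exact (Real.sqrt_pos.2 (hr _ e.2)).ne'

theorem energy_edgeFun (g : EdgeL2 G) :
    energy G r (edgeFun G r g) = ENNReal.ofReal (‖g‖ ^ 2 / 2) := by
  have hterm (e : {e : V × V // G.Adj e.1 e.2}) :
      edgeFun G r g e.1.1 e.1.2 ^ 2 * r s(e.1.1, e.1.2) = g e ^ 2 := by
    rw [apply_eq_edgeFun_mul_sqrt hr g e, mul_pow, Real.sq_sqrt (hr _ e.2).le]
  have hsum : HasSum (fun e => g e ^ 2) (‖g‖ ^ 2) := by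
    simpa [← real_inner_self_eq_norm_sq, sq] using lp.hasSum_inner (𝕜 := ℝ) g g
  rw [energy, tsum_congr fun e => congrArg ENNReal.ofReal (hterm e),
    ← ENNReal.ofReal_tsum_of_nonneg (fun _ => sq_nonneg _) hsum.summable, hsum.tsum_eq,
    ENNReal.ofReal_div_of_pos two_pos, ENNReal.ofReal_ofNat]

theorem energy_edgeFun_le_iff {g h : EdgeL2 G} :
    energy G r (edgeFun G r g) ≤ energy G r (edgeFun G r h) ↔ ‖g‖ ≤ ‖h‖ := by
  rw [energy_edgeFun hr, energy_edgeFun hr, ENNReal.ofReal_le_ofReal_iff (by positivity),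
    div_le_div_iff_of_pos_right two_pos, sq_le_sq₀ (norm_nonneg _) (norm_nonneg _)]

theorem exists_edgeFun_eq {f : V → V → ℝ} (hf : ∀ x y, ¬ G.Adj x y → f x y = 0)
    (hE : energy G r f ≠ ⊤) : ∃ g : EdgeL2 G, edgeFun G r g = f := by
  have hnonneg (e : {e : V × V // G.Adj e.1 e.2}) : 0 ≤ f e.1.1 e.1.2 ^ 2 * r s(e.1.1, e.1.2) :=
    mul_nonneg (sq_nonneg _) (hr _ e.2).le
  have hsum : Summable fun e : {e : V × V // G.Adj e.1 e.2} =>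
      ‖f e.1.1 e.1.2 * √(r s(e.1.1, e.1.2))‖ ^ (2 : ℝ≥0∞).toReal := by
    have htop : ∑' e : {e : V × V // G.Adj e.1 e.2},
        ENNReal.ofReal (f e.1.1 e.1.2 ^ 2 * r s(e.1.1, e.1.2)) ≠ ⊤ := fun htop =>
      hE (by rw [energy, htop, ENNReal.top_div_of_ne_top ENNReal.ofNat_ne_top])
    refine (ENNReal.summable_toReal htop).congr fun e => ?_
    rw [ENNReal.toReal_ofReal (hnonneg e), ENNReal.toReal_ofNat, Real.rpow_two, Real.norm_eq_abs,
      sq_abs, mul_pow, Real.sq_sqrt (hr _ e.2).le]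
  refine ⟨⟨_, memℓp_gen hsum⟩, funext fun x => funext fun y => ?_⟩
  by_cases h : G.Adj x y
  · rw [edgeFun_apply_of_adj _ h]
    exact mul_div_cancel_right₀ _ (Real.sqrt_pos.2 (hr _ h)).ne'
  · rw [edgeFun_apply_of_not_adj _ h, hf x y h]

end EdgeL2

section WalkVec

variable {V : Type} {G : SimpleGraph V} {r : Sym2 V → ℝ}

variable (r) in
noncomputable def dartVec (d : G.Dart) : EdgeL2 G :=
  lp.single 2 ⟨d.toProd, d.adj⟩ √(r d.edge) - lp.single 2 ⟨d.symm.toProd, d.symm.adj⟩ √(r d.edge)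

variable (r) in
noncomputable def walkVec {a b : V} (w : G.Walk a b) : EdgeL2 G :=
  (w.darts.map (dartVec r)).sum

variable (hr : ∀ e ∈ G.edgeSet, 0 < r e)
include hr

theorem edgeFun_dartVec (d : G.Dart) : edgeFun G r (dartVec r d) = dartFlow d := by
  obtain ⟨⟨a, c⟩, hac⟩ := d
  ext x y
  by_cases h : G.Adj x y
  · rw [edgeFun_apply_of_adj _ h]
    have hsqrt : √(r s(x, y)) ≠ 0 := (Real.sqrt_pos.2 (hr _ h)).ne'
    simp only [dartVec, dartFlow, lp.coeFn_sub, Pi.sub_apply, lp.single_apply, Pi.single_apply,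
      Subtype.ext_iff, Prod.mk.injEq, SimpleGraph.Dart.symm_toProd, Prod.swap_prod_mk,
      SimpleGraph.Dart.edge_mk]
    split_ifs with h₁ h₂ h₂
    · exact absurd (h₁.1.symm.trans h₂.1) hac.ne
    · obtain ⟨rfl, rfl⟩ := h₁
      simp [div_self hsqrt]
    · obtain ⟨rfl, rfl⟩ := h₂
      rw [Sym2.eq_swap (a := y), sub_div, zero_div, div_self hsqrt]
    · simp
  · have h₁ : (x, y) ≠ (a, c) := by rintro ⟨⟩; exact h hac
    have h₂ : (x, y) ≠ (c, a) := by rintro ⟨⟩; exact h hac.symm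
    simp [edgeFun_apply_of_not_adj _ h, dartFlow, h₁, h₂]

theorem edgeFun_walkVec {a b : V} (w : G.Walk a b) : edgeFun G r (walkVec r w) = walkFlow w := by
  simp [walkVec, walkFlow, map_list_sum, List.map_map, Function.comp_def, edgeFun_dartVec hr]

theorem inner_dartVec (g : EdgeL2 G) (hg : ∀ x y, edgeFun G r g x y = - edgeFun G r g y x)
    (d : G.Dart) : ⟪g, dartVec r d⟫ = 2 * (edgeFun G r g d.fst d.snd * r d.edge) := by
  obtain ⟨⟨a, c⟩, hac⟩ := d
  simp only [dartVec, SimpleGraph.Dart.symm_mk, Prod.swap_prod_mk, inner_sub_right,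
    lp.inner_single_right]
  rw [apply_eq_edgeFun_mul_sqrt hr g, apply_eq_edgeFun_mul_sqrt hr g]
  have hsq : √(r s(a, c)) * √(r s(a, c)) = r s(a, c) := Real.mul_self_sqrt (hr _ hac).le
  simp only [RCLike.inner_apply, conj_trivial, SimpleGraph.Dart.edge_mk, hg c a,
    Sym2.eq_swap (a := c)]
  linear_combination (2 * edgeFun G r g a c) * hsq

theorem inner_walkVec (g : EdgeL2 G) (hg : ∀ x y, edgeFun G r g x y = - edgeFun G r g y x)
    {a b : V} (w : G.Walk a b) :
    ⟪g, walkVec r w⟫ = 2 * (w.darts.map fun d => edgeFun G r g d.fst d.snd * r d.edge).sum := by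
  rw [walkVec]
  induction w.darts with
  | nil => simp
  | cons d L ih =>
    simp only [List.map_cons, List.sum_cons, inner_add_right, ih, inner_dartVec hr g hg d]
    ring

end WalkVec

theorem unique_minimum_energy_cutRespecting_flow_general
    {V : Type} (G : SimpleGraph V) (hconn : G.Connected)
    (hlf : ∀ v : V, (G.neighborSet v).Finite)
    (r : Sym2 V → ℝ) (hr : ∀ e ∈ G.edgeSet, 0 < r e)
    (p q : V) (hpq : p ≠ q) (I : ℝ) :
    ∃ i : V → V → ℝ,
      IsFlow G p q I i ∧ CutRespecting G p q i ∧
      (∀ f : V → V → ℝ, IsFlow G p q I f → CutRespecting G p q f →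
        energy G r i ≤ energy G r f) ∧
      CycleLaw G r i ∧
      ∀ j : V → V → ℝ, IsFlow G p q I j → CutRespecting G p q j →
        energy G r j = energy G r i → j = i := by
  set K := edgeFun G r ⁻¹' cutRespectingFlows G p q I
  have hK : Convex ℝ K := convex_cutRespectingFlows.linear_preimage _
  obtain ⟨w⟩ := hconn.preconnected p q
  have hwK : I • walkVec r w ∈ K := by
    simpa [K, edgeFun_walkVec hr] using
      smul_mem_cutRespectingFlows I (walkFlow_mem_cutRespectingFlows hpq w)
  obtain ⟨g₀, hg₀, hmin⟩ := exists_mem_forall_norm_le ⟨_, hwK⟩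
    ((isClosed_cutRespectingFlows hlf).preimage continuous_edgeFun) hK
  refine ⟨edgeFun G r g₀, hg₀.1, hg₀.2, fun f hf hcut => ?_, fun v c _ => ?_,
    fun j hj hcut hE => ?_⟩
  · rcases eq_or_ne (energy G r f) ⊤ with htop | htop
    · exact htop ▸ le_top
    obtain ⟨g, rfl⟩ := exists_edgeFun_eq hr hf.2.1 htop
    exact (energy_edgeFun_le_iff hr).2 (hmin g ⟨hf, hcut⟩)
  · have hmem (t : ℝ) : g₀ + t • walkVec r c ∈ K := by
      simpa [K, edgeFun_walkVec hr] using add_mem_cutRespectingFlows hg₀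
        (smul_mem_cutRespectingFlows t (walkFlow_mem_cutRespectingFlows_zero (p := p) (q := q) c))
    have horth := inner_eq_zero_of_add_mem_of_sub_mem hK hg₀ hmin (by simpa using hmem 1)
      (by simpa [sub_eq_add_neg] using hmem (-1))
    rw [inner_walkVec hr g₀ hg₀.1.1 c] at horth
    simpa using horth
  · obtain ⟨g, rfl⟩ := exists_edgeFun_eq hr hj.2.1
      (by rw [hE, energy_edgeFun hr]; exact ENNReal.ofReal_ne_top)
    rw [eq_of_norm_le_of_forall_norm_le hK hg₀ hmin ⟨hj, hcut⟩
      ((energy_edgeFun_le_iff hr).1 hE.le)]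

/-- In a countable connected locally finite network there is a unique
cut-respecting flow of intensity `I` of minimum energy, and it satisfies
Kirchhoff's cycle law. -/
theorem unique_minimum_energy_cutRespecting_flow
    {V : Type} [Countable V] (G : SimpleGraph V) (hconn : G.Connected)
    (hlf : ∀ v : V, (G.neighborSet v).Finite)
    (r : Sym2 V → ℝ) (hr : ∀ e ∈ G.edgeSet, 0 < r e)
    (p q : V) (hpq : p ≠ q) (I : ℝ) :
    ∃ i : V → V → ℝ,
      IsFlow G p q I i ∧ CutRespecting G p q i ∧
      (∀ f : V → V → ℝ, IsFlow G p q I f → CutRespecting G p q f →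
        energy G r i ≤ energy G r f) ∧
      CycleLaw G r i ∧
      ∀ j : V → V → ℝ, IsFlow G p q I j → CutRespecting G p q j →
        energy G r j = energy G r i → j = i :=
  unique_minimum_energy_cutRespecting_flow_general G hconn hlf r hr p q hpq I
end
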